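/- Let A and B₀ be constant real skew-symmetric 3×3 matrices, and set B(t) = e^{tA} B₀ e^{−tA} (which is skew-symmetric for every t, and is the solution of B′ = AB − BA given in the paper by the 3×3 matrix exponential exp(Nt)). Then v(t,x) = Ax, H(t,x) = B(t)x and p(t,x) = (ρ/2)|Ax|² + ρ μ₀ |B(t)x|² solve the MHD equations on ℝ × ℝ³. (Proposition 2.4.) -/

import Mathlib

open Real Matrix

/-- Partial derivative in the `i`-th spatial coordinate. -/
noncomputable def pd (i : Fin 3) (f : (Fin 3 → ℝ) → ℝ) (x : Fin 3 → ℝ) : ℝ :=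
  deriv (fun s => f (Function.update x i s)) (x i)

/-- Divergence of a vector field on `ℝ³`. -/
noncomputable def vdiv (F : (Fin 3 → ℝ) → (Fin 3 → ℝ)) (x : Fin 3 → ℝ) : ℝ :=
  ∑ i, pd i (fun y => F y i) x

/-- Curl of a vector field on `ℝ³`. -/
noncomputable def vcurl (F : (Fin 3 → ℝ) → (Fin 3 → ℝ)) (x : Fin 3 → ℝ) : Fin 3 → ℝ :=
  ![pd 1 (fun y => F y 2) x - pd 2 (fun y => F y 1) x,
    pd 2 (fun y => F y 0) x - pd 0 (fun y => F y 2) x,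
    pd 0 (fun y => F y 1) x - pd 1 (fun y => F y 0) x]

/-- Laplacian of a scalar field on `ℝ³`. -/
noncomputable def slap (f : (Fin 3 → ℝ) → ℝ) (x : Fin 3 → ℝ) : ℝ :=
  ∑ i, pd i (fun y => pd i f y) x

/-- Cross product on `ℝ³`. -/
def cross3 (u v : Fin 3 → ℝ) : Fin 3 → ℝ :=
  ![u 1 * v 2 - u 2 * v 1, u 2 * v 0 - u 0 * v 2, u 0 * v 1 - u 1 * v 0]

/-- The incompressible viscous MHD equations with finite electrical conductivity:
(M1) `∇·v = 0`, (M2) momentum, (M3) `∇·H = 0`, (M4) induction. -/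
def MHD (ρ ν μ₀ η : ℝ) (v H : ℝ → (Fin 3 → ℝ) → (Fin 3 → ℝ))
    (p : ℝ → (Fin 3 → ℝ) → ℝ) : Prop :=
  ∀ (t : ℝ) (x : Fin 3 → ℝ),
    vdiv (v t) x = 0 ∧
    (∀ i, deriv (fun s => v s x i) t
        + (∑ j, v t x j * pd j (fun y => v t y i) x)
        - μ₀ * cross3 (H t x) (vcurl (H t) x) i
        + (1 / ρ) * pd i (p t) x
        = ν * slap (fun y => v t y i) x) ∧
    vdiv (H t) x = 0 ∧
    (∀ i, deriv (fun s => H s x i) t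
        = vcurl (fun y => cross3 (v t y) (H t y)) x i
          + η * slap (fun y => H t y i) x)

/-! All fields are linear or quadratic in `x`, so each equation reduces to an identity between
3 × 3 matrices. Skew-symmetric matrices are traceless, which gives both divergence conditions.
In the momentum equation the convective term `A²x` cancels against `∇(|Ax|²/2) = AᵀAx = -A²x`,
and for skew `B` the Lorentz term `Bx × (∇ × Bx)` equals `2BᵀBx = ∇|Bx|²`. In the induction
equation `∇ × (Ax × Bx) = (AB - BA)x`, and `B(t) = e^{tA} B₀ e^{-tA}` solves `B' = AB - BA`;
it stays skew-symmetric because `(e^{tA})ᵀ = e^{-tA}`. -/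

section PartialDerivatives

variable {f g : (Fin 3 → ℝ) → ℝ} {x : Fin 3 → ℝ} (i : Fin 3)

theorem pd_eq_fderiv (hf : DifferentiableAt ℝ f x) :
    pd i f x = fderiv ℝ f x (Pi.single i 1) := by
  have hf' : HasFDerivAt f (fderiv ℝ f x) (Function.update x i (x i)) := by
    simpa using hf.hasFDerivAt
  exact (hf'.comp_hasDerivAt _ (hasDerivAt_update x i (x i))).deriv

theorem pd_continuousLinearMap (L : (Fin 3 → ℝ) →L[ℝ] ℝ) : pd i L x = L (Pi.single i 1) := by
  rw [pd_eq_fderiv i L.differentiableAt, L.fderiv]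

theorem pd_const (c : ℝ) : pd i (fun _ => c) x = 0 := by
  simp [pd]

theorem pd_add (hf : DifferentiableAt ℝ f x) (hg : DifferentiableAt ℝ g x) :
    pd i (fun y => f y + g y) x = pd i f x + pd i g x := by
  rw [pd_eq_fderiv i (hf.fun_add hg), fderiv_fun_add hf hg, pd_eq_fderiv i hf,
    pd_eq_fderiv i hg]
  rfl

theorem pd_sub (hf : DifferentiableAt ℝ f x) (hg : DifferentiableAt ℝ g x) :
    pd i (fun y => f y - g y) x = pd i f x - pd i g x := by
  rw [pd_eq_fderiv i (hf.fun_sub hg), fderiv_fun_sub hf hg, pd_eq_fderiv i hf,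
    pd_eq_fderiv i hg]
  rfl

theorem pd_mul (hf : DifferentiableAt ℝ f x) (hg : DifferentiableAt ℝ g x) :
    pd i (fun y => f y * g y) x = pd i f x * g x + f x * pd i g x := by
  rw [pd_eq_fderiv i (hf.fun_mul hg), fderiv_fun_mul hf hg, pd_eq_fderiv i hf,
    pd_eq_fderiv i hg]
  simp only [_root_.add_apply, _root_.smul_apply, smul_eq_mul]
  ring

theorem pd_sum {ι : Type*} (s : Finset ι) {F : ι → (Fin 3 → ℝ) → ℝ}
    (hF : ∀ k ∈ s, DifferentiableAt ℝ (F k) x) :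
    pd i (fun y => ∑ k ∈ s, F k y) x = ∑ k ∈ s, pd i (F k) x := by
  rw [pd_eq_fderiv i (DifferentiableAt.fun_sum hF), fderiv_fun_sum hF]
  simp only [FunLike.coe_sum, Finset.sum_apply]
  exact Finset.sum_congr rfl fun k hk => (pd_eq_fderiv i (hF k hk)).symm

theorem pd_const_mul (c : ℝ) (hf : DifferentiableAt ℝ f x) :
    pd i (fun y => c * f y) x = c * pd i f x := by
  rw [pd_mul i (differentiableAt_const c) hf, pd_const]
  ring

end PartialDerivatives

section LinearFields

variable (M N : Matrix (Fin 3) (Fin 3) ℝ) (x : Fin 3 → ℝ)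

@[fun_prop]
theorem differentiable_mulVec_apply (k : Fin 3) : Differentiable ℝ (fun y => (M *ᵥ y) k) := by
  simp only [mulVec, dotProduct]
  fun_prop

theorem differentiable_dotProduct_mulVec :
    Differentiable ℝ (fun y => (M *ᵥ y) ⬝ᵥ (N *ᵥ y)) := by
  simp only [dotProduct]
  fun_prop

theorem pd_mulVec_apply (k i : Fin 3) : pd i (fun y => (M *ᵥ y) k) x = M k i :=
  (pd_continuousLinearMap i
    ((ContinuousLinearMap.proj k).comp (toLin' M).toContinuousLinearMap)).trans (by simp)

theorem pd_mulVec_apply_mul (a b i : Fin 3) :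
    pd i (fun y => (M *ᵥ y) a * (N *ᵥ y) b) x = M a i * (N *ᵥ x) b + (M *ᵥ x) a * N b i := by
  rw [pd_mul i (by fun_prop) (by fun_prop), pd_mulVec_apply, pd_mulVec_apply]

theorem pd_dotProduct_mulVec (i : Fin 3) :
    pd i (fun y => (M *ᵥ y) ⬝ᵥ (N *ᵥ y)) x = (Mᵀ *ᵥ (N *ᵥ x)) i + (Nᵀ *ᵥ (M *ᵥ x)) i := by
  change pd i (fun y => ∑ k, (M *ᵥ y) k * (N *ᵥ y) k) x = _
  rw [pd_sum i _ fun k _ => by fun_prop]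
  simp only [pd_mulVec_apply_mul, Finset.sum_add_distrib]
  simp only [mulVec, dotProduct, transpose_apply, mul_comm]

theorem vdiv_mulVec : vdiv (M *ᵥ ·) x = M.trace := by
  simp [vdiv, pd_mulVec_apply, Matrix.trace]

theorem slap_mulVec_apply (k : Fin 3) : slap (fun y => (M *ᵥ y) k) x = 0 := by
  simp [slap, pd_mulVec_apply, pd_const]

theorem vcurl_mulVec :
    vcurl (M *ᵥ ·) x = ![M 2 1 - M 1 2, M 0 2 - M 2 0, M 1 0 - M 0 1] := by
  simp [vcurl, pd_mulVec_apply]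

end LinearFields

section SkewSymmetric

theorem trace_eq_zero_of_transpose_eq_neg {n : Type*} [Fintype n] {M : Matrix n n ℝ}
    (hM : Mᵀ = -M) : M.trace = 0 := by
  have h := congrArg Matrix.trace hM
  rw [trace_transpose, trace_neg] at h
  linarith

theorem exists_eq_of_transpose_eq_neg {M : Matrix (Fin 3) (Fin 3) ℝ} (hM : Mᵀ = -M) :
    ∃ a b c : ℝ, M = !![0, a, b; -a, 0, c; -b, -c, 0] := by
  have h : ∀ i j, M j i = -M i j := fun i j => congrFun₂ hM i j
  have hdiag : ∀ i, M i i = 0 := fun i => by linarith [h i i]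
  refine ⟨M 0 1, M 0 2, M 1 2, ?_⟩
  ext i j
  fin_cases i <;> fin_cases j <;> simp [hdiag, h 0 1, h 0 2, h 1 2]

variable {A B : Matrix (Fin 3) (Fin 3) ℝ} (x : Fin 3 → ℝ)

theorem cross3_mulVec_vcurl_mulVec (hB : Bᵀ = -B) :
    cross3 (B *ᵥ x) (vcurl (B *ᵥ ·) x) = (2 : ℝ) • (Bᵀ *ᵥ (B *ᵥ x)) := by
  obtain ⟨a, b, c, rfl⟩ := exists_eq_of_transpose_eq_neg hB
  rw [vcurl_mulVec]
  ext i
  fin_cases i <;>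
  · simp [cross3, mulVec, dotProduct, Fin.sum_univ_three]
    ring

theorem vcurl_cross3_mulVec (hA : Aᵀ = -A) (hB : Bᵀ = -B) :
    vcurl (fun y => cross3 (A *ᵥ y) (B *ᵥ y)) x = (A * B - B * A) *ᵥ x := by
  ext i
  fin_cases i <;>
  · simp only [vcurl, cross3, Fin.isValue, cons_val]
    simp (disch := fun_prop) only [pd_sub, pd_mulVec_apply_mul]
    obtain ⟨a, b, c, rfl⟩ := exists_eq_of_transpose_eq_neg hA
    obtain ⟨d, e, f, rfl⟩ := exists_eq_of_transpose_eq_neg hB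
    simp [mulVec, dotProduct, Fin.sum_univ_three]
    ring

theorem momentum_mulVec_eq_zero {ρ : ℝ} (μ₀ : ℝ) (hρ : ρ ≠ 0) (hA : Aᵀ = -A) (hB : Bᵀ = -B)
    (i : Fin 3) :
    (∑ j, (A *ᵥ x) j * pd j (fun y => (A *ᵥ y) i) x)
        - μ₀ * cross3 (B *ᵥ x) (vcurl (B *ᵥ ·) x) i
        + (1 / ρ) * pd i (fun y => ρ / 2 * ((A *ᵥ y) ⬝ᵥ (A *ᵥ y))
            + ρ * μ₀ * ((B *ᵥ y) ⬝ᵥ (B *ᵥ y))) x = 0 := by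
  have hconvective : ∑ j, (A *ᵥ x) j * pd j (fun y => (A *ᵥ y) i) x = (A *ᵥ (A *ᵥ x)) i := by
    simp only [pd_mulVec_apply]
    simp only [mulVec, dotProduct, mul_comm]
  rw [hconvective, cross3_mulVec_vcurl_mulVec x hB,
    pd_add i ((differentiable_dotProduct_mulVec A A).differentiableAt.const_mul _)
      ((differentiable_dotProduct_mulVec B B).differentiableAt.const_mul _),
    pd_const_mul i _ (differentiable_dotProduct_mulVec A A).differentiableAt,
    pd_const_mul i _ (differentiable_dotProduct_mulVec B B).differentiableAt,
    pd_dotProduct_mulVec, pd_dotProduct_mulVec, hA, hB]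
  simp only [neg_mulVec, Pi.neg_apply, Pi.smul_apply, smul_eq_mul]
  field_simp
  ring

end SkewSymmetric

section ConjugationFlow

open NormedSpace

theorem hasDerivAt_exp_smul_mul_mul_exp_neg_smul {𝕂 𝔸 : Type*} [RCLike 𝕂] [NormedRing 𝔸]
    [NormedAlgebra 𝕂 𝔸] [CompleteSpace 𝔸] (a b : 𝔸) (t : 𝕂) :
    HasDerivAt (fun s : 𝕂 => exp (s • a) * b * exp (-(s • a)))
      (a * (exp (t • a) * b * exp (-(t • a))) - exp (t • a) * b * exp (-(t • a)) * a) t := by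
  have hneg : HasDerivAt (fun s : 𝕂 => exp (-(s • a))) (exp (-(t • a)) * -a) t := by
    simpa only [smul_neg] using hasDerivAt_exp_smul_const (-a) t
  refine (((hasDerivAt_exp_smul_const' a t).mul_const b).mul hneg).congr_deriv ?_
  noncomm_ring

variable {n : Type*} [Fintype n] [DecidableEq n]

theorem transpose_exp_smul_mul_mul_exp_neg_smul {A B : Matrix n n ℝ} (hA : Aᵀ = -A)
    (hB : Bᵀ = -B) (t : ℝ) :
    (exp (t • A) * B * exp (-(t • A)))ᵀ = -(exp (t • A) * B * exp (-(t • A))) := by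
  have hexp : ∀ s : ℝ, (exp (s • A))ᵀ = exp (-(s • A)) := fun s => by
    rw [← Matrix.exp_transpose, transpose_smul, hA, smul_neg]
  rw [transpose_mul, transpose_mul, hB, hexp, ← neg_smul, hexp, neg_smul, neg_neg]
  noncomm_ring

attribute [local instance] Matrix.linftyOpNormedRing Matrix.linftyOpNormedAlgebra

theorem HasDerivAt.mulVec_apply {M : ℝ → Matrix n n ℝ} {M' : Matrix n n ℝ} {t : ℝ}
    (hM : HasDerivAt M M' t) (x : n → ℝ) (i : n) :
    HasDerivAt (fun s => (M s *ᵥ x) i) ((M' *ᵥ x) i) t := by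
  let L : Matrix n n ℝ →ₗ[ℝ] ℝ := (LinearMap.proj i).comp ((mulVecBilin ℝ ℝ).flip x)
  exact L.toContinuousLinearMap.hasFDerivAt.comp_hasDerivAt t hM

theorem hasDerivAt_mulVec_exp_smul_mul_mul_exp_neg_smul (A B : Matrix n n ℝ) (x : n → ℝ)
    (i : n) (t : ℝ) :
    HasDerivAt (fun s : ℝ => ((exp (s • A) * B * exp (-(s • A))) *ᵥ x) i)
      (((A * (exp (t • A) * B * exp (-(t • A))) - exp (t • A) * B * exp (-(t • A)) * A) *ᵥ x) i)
      t :=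
  (hasDerivAt_exp_smul_mul_mul_exp_neg_smul A B t).mulVec_apply x i

end ConjugationFlow

/-- Proposition 2.4: `v = Ax` with `A` constant skew-symmetric,
`H(t) = e^{tA} B₀ e^{-tA} x` with `B₀` skew-symmetric. -/
theorem stmt_3 (ρ ν μ₀ η : ℝ) (hρ : 0 < ρ)
    (A B₀ : Matrix (Fin 3) (Fin 3) ℝ)
    (hA : Aᵀ = -A) (hB : B₀ᵀ = -B₀) :
    MHD ρ ν μ₀ η (fun _ x => A.mulVec x)
      (fun t x =>
        (NormedSpace.exp (t • A) * B₀ * NormedSpace.exp (-(t • A))).mulVec x)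
      (fun t x => (ρ / 2) * (A.mulVec x ⬝ᵥ A.mulVec x)
        + ρ * μ₀ *
          ((NormedSpace.exp (t • A) * B₀ * NormedSpace.exp (-(t • A))).mulVec x ⬝ᵥ
            (NormedSpace.exp (t • A) * B₀ * NormedSpace.exp (-(t • A))).mulVec x)) := by
  intro t x
  have hB_t := transpose_exp_smul_mul_mul_exp_neg_smul hA hB t
  refine ⟨?_, fun i => ?_, ?_, fun i => ?_⟩
  · rw [vdiv_mulVec, trace_eq_zero_of_transpose_eq_neg hA]
  · rw [deriv_const, slap_mulVec_apply, mul_zero, zero_add]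
    exact momentum_mulVec_eq_zero x μ₀ hρ.ne' hA hB_t i
  · rw [vdiv_mulVec, trace_eq_zero_of_transpose_eq_neg hB_t]
  · rw [(hasDerivAt_mulVec_exp_smul_mul_mul_exp_neg_smul A B₀ x i t).deriv,
      slap_mulVec_apply, mul_zero, add_zero, vcurl_cross3_mulVec x hA hB_t]
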